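/- Theorem (twisting construction of Section 5: the group C_n ≀ Γ(𝒦) with its distinguished generating subgroups). Let k ≥ 1 and let R_0, …, R_{k−1} be subgroups of G; write G_I := ⟨R_i : i ∈ I⟩ for I ⊆ {0,…,k−1}, and assume the intersection property G_I ∩ G_J = G_{I∩J} for all I, J ⊆ {0,…,k−1}. Fix x₀ ∈ V, assume π(g)(x₀) = x₀ for every g ∈ G_{{1,…,k−1}}, and assume the orbit intersection property: (x₀ · G_I) ∩ (x₀ · G_J) = x₀ · G_{I∩J} for all I, J ⊆ {0,…,k−1}, where x₀ · G_I denotes the orbit of x₀ under π(G_I). In Γ := (V → ZMod n) ⋊ G define R̂_0 := C_{x₀} and R̂_i := R_{i−1} (embedded as {(0, h) : h ∈ R_{i−1}}) for 1 ≤ i ≤ k, and write Γ_I := ⟨R̂_i : i ∈ I⟩ for I ⊆ {0,…,k}. Then: (a) every element of R̂_0 commutes with every element of R̂_i for 2 ≤ i ≤ k; (b) Γ_I ∩ Γ_J = Γ_{I∩J} for all I, J ⊆ {0,…,k}; (c) if moreover G = ⟨R_0, …, R_{k−1}⟩ and π(G) acts transitively on V, then Γ = Γ_{{0,…,k}} =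 ⟨R̂_0, …, R̂_k⟩. -/

import Mathlib

/-!
The key fact is an explicit description of `Γ_I`: it consists of the pairs `(w, g)` with
`g ∈ G_{I-1}` and `w` supported on the orbit `x₀ · G_{I-1}` when `0 ∈ I`, and `w = 0` otherwise.
The generators lie in this subgroup, and conversely conjugating `C_{x₀}` by `g ∈ G_{I-1}` gives
`C_{π(g) x₀}`, so every such `(w, g)` is a product of generators. With this description, (b)
follows coordinatewise from the intersection properties of the `G_I` and of the orbits, and
(c) from generation and transitivity. For (a), the elements of `R̂_i`, `i ≥ 2`, fix `x₀`, hence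
centralize `C_{x₀}`.
-/

/-- The coordinate-permuting action on a direct power of a group: `(φ·σ)_i = σ_{φ⁻¹ i}`. -/
def permPi (v : ℕ) (G : Type*) [Group G] : Equiv.Perm (Fin v) →* MulAut (Fin v → G) where
  toFun φ :=
    { toFun := fun σ i => σ (φ⁻¹ i)
      invFun := fun σ i => σ (φ i)
      left_inv := fun σ => by funext i; simp
      right_inv := fun σ => by funext i; simp
      map_mul' := fun σ τ => rfl }
  map_one' := by ext σ i; simp
  map_mul' := fun φ ψ => by ext σ i; simp [mul_inv_rev]

section

variable {G : Type*} [Group G] (n v : ℕ) (π : G →* Equiv.Perm (Fin v))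

/-- The semidirect product `Γ = (V → ZMod n) ⋊ G`, where `g ∈ G` acts on functions by
`(g·w)(i) = w(π(g)⁻¹ i)`.  (The additive group `ZMod n` is written multiplicatively.) -/
abbrev GammaSDP := (Fin v → Multiplicative (ZMod n))
  ⋊[(permPi v (Multiplicative (ZMod n))).comp π] G

/-- The canonical copy `C_x` of `ZMod n` at coordinate `x`:
the subgroup `{(w, 1) : w i = 0 for all i ≠ x}` of `Γ`. -/
def coordCopy (x : Fin v) : Subgroup (GammaSDP n v π) where
  carrier := {p | p.right = 1 ∧ ∀ i, i ≠ x → Multiplicative.toAdd (p.left i) = 0}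
  one_mem' := by
    refine ⟨rfl, fun i _ => ?_⟩
    simp [SemidirectProduct.one_left]
  mul_mem' := by
    rintro p q ⟨hp1, hp2⟩ ⟨hq1, hq2⟩
    refine ⟨by simp [SemidirectProduct.mul_right, hp1, hq1], fun i hi => ?_⟩
    have h : (p * q).left i = p.left i *
        (((permPi v (Multiplicative (ZMod n))).comp π) p.right q.left) i := rfl
    rw [h]
    have h2 : (((permPi v (Multiplicative (ZMod n))).comp π) p.right q.left) i
        = q.left ((π p.right)⁻¹ i) := rfl
    rw [h2, hp1]
    simp only [map_one]
    have h3 : ((1 : Equiv.Perm (Fin v)))⁻¹ i = i := rfl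
    rw [h3, toAdd_mul, hp2 i hi, hq2 i hi, add_zero]
  inv_mem' := by
    rintro p ⟨hp1, hp2⟩
    refine ⟨by simp [SemidirectProduct.inv_right, hp1], fun i hi => ?_⟩
    have h : (p⁻¹).left i = ((((permPi v (Multiplicative (ZMod n))).comp π) p.right⁻¹)
        p.left⁻¹) i := rfl
    rw [h]
    have h2 : ((((permPi v (Multiplicative (ZMod n))).comp π) p.right⁻¹) p.left⁻¹) i
        = (p.left ((π p.right⁻¹)⁻¹ i))⁻¹ := rfl
    rw [h2, hp1]
    simp [hp2 i hi]

variable {k : ℕ} (R : Fin k → Subgroup G) (x₀ : Fin v)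

/-- `G_I = ⟨R_i : i ∈ I⟩`. -/
def GI (I : Set (Fin k)) : Subgroup G := ⨆ i ∈ I, R i

/-- The orbit `x₀ · G_I` of the base point `x₀` under `π(G_I)`. -/
def orb (I : Set (Fin k)) : Set (Fin v) := {x | ∃ g ∈ GI R I, π g x₀ = x}

/-- The distinguished generating subgroups `R̂_0 = C_{x₀}` and `R̂_i = R_{i−1}`
(for `1 ≤ i ≤ k`) of `Γ`. -/
def Rhat (i : Fin (k + 1)) : Subgroup (GammaSDP n v π) :=
  if h : (i : ℕ) = 0 then coordCopy n v π x₀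
  else Subgroup.map (SemidirectProduct.inr) (R ⟨(i : ℕ) - 1, by omega⟩)

/-- `Γ_I = ⟨R̂_i : i ∈ I⟩`. -/
def GammaI (I : Set (Fin (k + 1))) : Subgroup (GammaSDP n v π) :=
  ⨆ i ∈ I, Rhat n v π R x₀ i

open SemidirectProduct

section

variable {n v π}

lemma permPi_mulSingle {M : Type*} [Group M] (φ : Equiv.Perm (Fin v)) (x : Fin v) (c : M) :
    permPi v M φ (Pi.mulSingle x c : Fin v → M) = Pi.mulSingle (φ x) c := by
  funext i
  show (Pi.mulSingle x c : Fin v → M) (φ⁻¹ i) = _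
  simp only [Pi.mulSingle_apply, Equiv.Perm.inv_eq_iff_eq]

lemma GammaSDP.mul_left_apply (p q : GammaSDP n v π) (x : Fin v) :
    (p * q).left x = p.left x * q.left ((π p.right)⁻¹ x) := rfl

lemma GammaSDP.inv_left_apply (p : GammaSDP n v π) (x : Fin v) :
    p⁻¹.left x = (p.left (π p.right x))⁻¹ := by
  show (p.left ((π p.right⁻¹)⁻¹ x))⁻¹ = _
  simp

end

def supportedSubgroup (H : Subgroup G) (S : Set (Fin v))
    (hS : ∀ g ∈ H, Set.MapsTo (π g) S S) : Subgroup (GammaSDP n v π) where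
  carrier := {p | p.right ∈ H ∧ ∀ x ∉ S, p.left x = 1}
  one_mem' := ⟨one_mem H, fun _ _ => rfl⟩
  mul_mem' := by
    rintro p q ⟨hp, hpS⟩ ⟨hq, hqS⟩
    refine ⟨mul_mem hp hq, fun x hx => ?_⟩
    rw [GammaSDP.mul_left_apply, hpS x hx, hqS _ fun hy => hx ?_, one_mul]
    simpa using hS _ hp hy
  inv_mem' := by
    rintro p ⟨hp, hpS⟩
    refine ⟨inv_mem hp, fun x hx => ?_⟩
    rw [GammaSDP.inv_left_apply, hpS _ fun hy => hx ?_, inv_one]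
    simpa using hS _ (inv_mem hp) hy

section

variable {n v π}

@[simp]
lemma mem_supportedSubgroup {H : Subgroup G} {S : Set (Fin v)}
    {hS : ∀ g ∈ H, Set.MapsTo (π g) S S} {p : GammaSDP n v π} :
    p ∈ supportedSubgroup n v π H S hS ↔ p.right ∈ H ∧ ∀ x ∉ S, p.left x = 1 :=
  Iff.rfl

lemma supportedSubgroup_inf {H H' : Subgroup G} {S S' : Set (Fin v)}
    (hS : ∀ g ∈ H, Set.MapsTo (π g) S S) (hS' : ∀ g ∈ H', Set.MapsTo (π g) S' S') :
    supportedSubgroup n v π H S hS ⊓ supportedSubgroup n v π H' S' hS' =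
      supportedSubgroup n v π (H ⊓ H') (S ∩ S')
        fun g hg => (hS g hg.1).inter_inter (hS' g hg.2) := by
  ext p
  simp only [Subgroup.mem_inf, mem_supportedSubgroup]
  constructor
  · rintro ⟨⟨hp, hpS⟩, hp', hpS'⟩
    refine ⟨⟨hp, hp'⟩, fun x hx => ?_⟩
    by_cases h : x ∈ S
    · exact hpS' x fun h' => hx ⟨h, h'⟩
    · exact hpS x h
  · rintro ⟨⟨hp, hp'⟩, hpS⟩
    exact ⟨⟨hp, fun x hx => hpS x fun h => hx h.1⟩, hp', fun x hx => hpS x fun h => hx h.2⟩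

lemma map_inr_le_supportedSubgroup {H : Subgroup G} {S : Set (Fin v)}
    (hS : ∀ g ∈ H, Set.MapsTo (π g) S S) :
    H.map (inr : G →* GammaSDP n v π) ≤ supportedSubgroup n v π H S hS := by
  rintro _ ⟨g, hg, rfl⟩
  exact ⟨hg, fun _ _ => rfl⟩

lemma coordCopy_le_supportedSubgroup {H : Subgroup G} {S : Set (Fin v)}
    {hS : ∀ g ∈ H, Set.MapsTo (π g) S S} {x : Fin v} (hx : x ∈ S) :
    coordCopy n v π x ≤ supportedSubgroup n v π H S hS := by
  rintro p ⟨hp, hpx⟩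
  exact ⟨hp ▸ one_mem H,
    fun y hy => toAdd_eq_zero.mp (hpx y (ne_of_mem_of_not_mem hx hy).symm)⟩

lemma inl_mulSingle_mem_coordCopy (x : Fin v) (c : Multiplicative (ZMod n)) :
    inl (Pi.mulSingle x c) ∈ coordCopy n v π x :=
  ⟨rfl, fun i hi => by simp [Pi.mulSingle_eq_of_ne hi]⟩

lemma eq_inl_mulSingle_of_mem_coordCopy {x : Fin v} {p : GammaSDP n v π}
    (hp : p ∈ coordCopy n v π x) : p = inl (Pi.mulSingle x (p.left x)) := by
  obtain ⟨hp1, hpx⟩ := hp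
  refine SemidirectProduct.ext (funext fun i => ?_) (by simp [hp1])
  by_cases hi : i = x
  · subst hi; simp
  · simpa [Pi.mulSingle_eq_of_ne hi] using hpx i hi

lemma inl_mulSingle_apply_mem {K : Subgroup (GammaSDP n v π)} {g : G} (hg : inr g ∈ K)
    {x : Fin v} {c : Multiplicative (ZMod n)} (hx : inl (Pi.mulSingle x c) ∈ K) :
    inl (Pi.mulSingle (π g x) c) ∈ K := by
  rw [← permPi_mulSingle, ← MonoidHom.comp_apply, inl_aut]
  exact mul_mem (mul_mem hg hx) (by simpa using inv_mem hg)

lemma supportedSubgroup_le {H : Subgroup G} {S : Set (Fin v)}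
    {hS : ∀ g ∈ H, Set.MapsTo (π g) S S} {K : Subgroup (GammaSDP n v π)}
    (hH : H.map inr ≤ K) (hSK : ∀ x ∈ S, ∀ c, inl (Pi.mulSingle x c) ∈ K) :
    supportedSubgroup n v π H S hS ≤ K := by
  rintro p ⟨hp, hpS⟩
  rw [← inl_left_mul_inr_right p]
  refine mul_mem (Subgroup.mem_comap.mp ?_) (hH ⟨_, hp, rfl⟩)
  rw [← Finset.univ_prod_mulSingle p.left]
  refine prod_mem fun x _ => ?_
  by_cases hx : x ∈ S
  · exact hSK x hx _
  · simp [hpS x hx]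

lemma commute_inr_of_mem_coordCopy {x : Fin v} {p : GammaSDP n v π}
    (hp : p ∈ coordCopy n v π x) {g : G} (hg : π g x = x) : Commute p (inr g) := by
  rw [eq_inl_mulSingle_of_mem_coordCopy hp]
  have h := inl_aut (φ := (permPi v (Multiplicative (ZMod n))).comp π) g
    (Pi.mulSingle x (p.left x))
  rw [MonoidHom.comp_apply, permPi_mulSingle, hg, map_inv] at h
  exact eq_mul_inv_iff_mul_eq.mp h

end

def GammaISupport (I : Set (Fin (k + 1))) : Set (Fin v) :=
  {x | 0 ∈ I ∧ x ∈ orb v π R x₀ (Fin.succ ⁻¹' I)}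

section

variable {n v π R x₀}

lemma le_GI {I : Set (Fin k)} {i : Fin k} (hi : i ∈ I) : R i ≤ GI R I :=
  le_iSup₂ (f := fun i _ => R i) i hi

lemma mem_orb_self (I : Set (Fin k)) : x₀ ∈ orb v π R x₀ I :=
  ⟨1, one_mem _, by simp⟩

lemma orb_mapsTo {I : Set (Fin k)} {g : G} (hg : g ∈ GI R I) :
    Set.MapsTo (π g) (orb v π R x₀ I) (orb v π R x₀ I) := by
  rintro _ ⟨h, hh, rfl⟩
  exact ⟨g * h, mul_mem hg hh, by simp⟩

lemma GammaISupport_mapsTo (I : Set (Fin (k + 1))) :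
    ∀ g ∈ GI R (Fin.succ ⁻¹' I),
      Set.MapsTo (π g) (GammaISupport v π R x₀ I) (GammaISupport v π R x₀ I) :=
  fun _ hg _ hx => ⟨hx.1, orb_mapsTo hg hx.2⟩

lemma GammaISupport_inter
    (horb : ∀ I J : Set (Fin k), orb v π R x₀ I ∩ orb v π R x₀ J = orb v π R x₀ (I ∩ J))
    (I J : Set (Fin (k + 1))) :
    GammaISupport v π R x₀ (I ∩ J) = GammaISupport v π R x₀ I ∩ GammaISupport v π R x₀ J := by
  ext x
  simp only [GammaISupport, Set.mem_inter_iff, Set.mem_ofPred_eq, Set.preimage_inter, ← horb]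
  tauto

lemma Rhat_zero : Rhat n v π R x₀ 0 = coordCopy n v π x₀ := dif_pos rfl

lemma Rhat_succ (j : Fin k) :
    Rhat n v π R x₀ j.succ = (R j).map (inr : G →* GammaSDP n v π) :=
  dif_neg (Nat.succ_ne_zero j)

lemma Rhat_le_GammaI {I : Set (Fin (k + 1))} {i : Fin (k + 1)} (hi : i ∈ I) :
    Rhat n v π R x₀ i ≤ GammaI n v π R x₀ I :=
  le_iSup₂ (f := fun i _ => Rhat n v π R x₀ i) i hi

lemma map_inr_GI_le_GammaI (I : Set (Fin (k + 1))) :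
    (GI R (Fin.succ ⁻¹' I)).map (inr : G →* GammaSDP n v π) ≤ GammaI n v π R x₀ I :=
  Subgroup.map_le_iff_le_comap.mpr <| iSup₂_le fun j hj =>
    Subgroup.map_le_iff_le_comap.mp ((Rhat_succ j).symm.trans_le (Rhat_le_GammaI hj))

lemma GammaI_eq_supportedSubgroup (I : Set (Fin (k + 1))) :
    GammaI n v π R x₀ I = supportedSubgroup n v π (GI R (Fin.succ ⁻¹' I))
      (GammaISupport v π R x₀ I) (GammaISupport_mapsTo I) := by
  apply le_antisymm
  · refine iSup₂_le fun i hi => ?_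
    cases i using Fin.cases with
    | zero =>
      exact Rhat_zero (R := R) ▸ coordCopy_le_supportedSubgroup ⟨hi, mem_orb_self _⟩
    | succ j =>
      rw [Rhat_succ]
      exact (Subgroup.map_mono (le_GI (R := R) hi)).trans (map_inr_le_supportedSubgroup _)
  · refine supportedSubgroup_le (map_inr_GI_le_GammaI I) ?_
    rintro _ ⟨h0, g, hg, rfl⟩ c
    exact inl_mulSingle_apply_mem (map_inr_GI_le_GammaI I ⟨g, hg, rfl⟩)
      (Rhat_le_GammaI h0 (Rhat_zero (R := R) ▸ inl_mulSingle_mem_coordCopy x₀ c))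

lemma commute_of_mem_Rhat_zero
    (hfix : ∀ g ∈ GI R {i : Fin k | (i : ℕ) ≠ 0}, π g x₀ = x₀)
    {i : Fin (k + 1)} (hi : 2 ≤ (i : ℕ)) {p q : GammaSDP n v π}
    (hp : p ∈ Rhat n v π R x₀ 0) (hq : q ∈ Rhat n v π R x₀ i) :
    Commute p q := by
  obtain ⟨j, rfl⟩ := Fin.exists_succ_eq.mpr (by rintro rfl; simp at hi : i ≠ 0)
  rw [Rhat_zero] at hp
  rw [Rhat_succ] at hq
  obtain ⟨g, hg, rfl⟩ := hq
  have hj : (j : ℕ) ≠ 0 := by simp only [Fin.val_succ] at hi; omega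
  exact commute_inr_of_mem_coordCopy hp (hfix g (le_GI (R := R) hj hg))

lemma GammaI_inf (hint : ∀ I J : Set (Fin k), GI R I ⊓ GI R J = GI R (I ∩ J))
    (horb : ∀ I J : Set (Fin k), orb v π R x₀ I ∩ orb v π R x₀ J = orb v π R x₀ (I ∩ J))
    (I J : Set (Fin (k + 1))) :
    GammaI n v π R x₀ I ⊓ GammaI n v π R x₀ J = GammaI n v π R x₀ (I ∩ J) := by
  simp only [GammaI_eq_supportedSubgroup, supportedSubgroup_inf]
  congr 1
  · exact hint _ _
  · exact (GammaISupport_inter horb I J).symm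

lemma GammaI_univ_eq_top (hgen : (⨆ i : Fin k, R i) = ⊤)
    (htrans : ∀ x y : Fin v, ∃ g : G, π g x = y) : GammaI n v π R x₀ Set.univ = ⊤ := by
  have hGI : GI R (Fin.succ ⁻¹' Set.univ) = ⊤ := by simpa [GI, iSup_univ] using hgen
  refine eq_top_iff.mpr fun p _ => ?_
  rw [GammaI_eq_supportedSubgroup, mem_supportedSubgroup, hGI]
  refine ⟨Subgroup.mem_top _, fun x hx => absurd ?_ hx⟩
  obtain ⟨g, hg⟩ := htrans x₀ x
  exact ⟨Set.mem_univ 0, g, hGI ▸ Subgroup.mem_top g, hg⟩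

end

theorem twisting_subgroups_of_powerComplex
    (hint : ∀ I J : Set (Fin k), GI R I ⊓ GI R J = GI R (I ∩ J))
    (hfix : ∀ g ∈ GI R {i : Fin k | (i : ℕ) ≠ 0}, π g x₀ = x₀)
    (horb : ∀ I J : Set (Fin k), orb v π R x₀ I ∩ orb v π R x₀ J = orb v π R x₀ (I ∩ J)) :
    (∀ i : Fin (k + 1), 2 ≤ (i : ℕ) →
      ∀ p ∈ Rhat n v π R x₀ 0, ∀ q ∈ Rhat n v π R x₀ i, Commute p q) ∧
    (∀ I J : Set (Fin (k + 1)),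
      GammaI n v π R x₀ I ⊓ GammaI n v π R x₀ J = GammaI n v π R x₀ (I ∩ J)) ∧
    ((⨆ i : Fin k, R i) = ⊤ → (∀ x y : Fin v, ∃ g : G, π g x = y) →
      GammaI n v π R x₀ Set.univ = ⊤) :=
  ⟨fun _ hi _ hp _ hq => commute_of_mem_Rhat_zero hfix hi hp hq, GammaI_inf hint horb,
    fun hgen htrans => GammaI_univ_eq_top hgen htrans⟩

end
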